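/- Let R > 0, m_1, m_2, m_3 > 0, let α ∈ (0, R) be real, and let c ∈ ℂ with |c| < R, c ≠ 0 and c ≠ α. If the triple of points (c_1, c_2, c_3) = (0, α, c) satisfies the elliptic relative-equilibrium equations with n = 3, then c = −α and m_2 = m_3. -/

import Mathlib

open Complex ComplexConjugate Finset

/-!
The central body feels no rotation term, so the attractions of the other two bodies on it
cancel; as they point along `α` and `c`, this forces `c = -x` with `x = ‖c‖ > 0`, and gives
`m₂ x² (R² - α²)² = m₃ α² (R² - x²)²`. The configuration is now collinear on the real axis,
and the equations of the two outer bodies (the one at `-x` after reflection through `0`) read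
`f α = m₁ + m₃ α² (R² - x²)² / D` and `f x = m₁ + m₂ x² (R² - α²)² / D` with
`f t = 2 R⁶ t³ (R² + t²) / (R² - t²)⁴` and the same `D`. The right-hand sides agree, and `f` is
strictly increasing on `[0, R)`, so `x = α`, and then `m₂ = m₃`.
-/

/-- The quantity `Θ_{2,(k,j)}` appearing in the denominators of the equations of
motion of the curved `n`-body problem in the Poincaré disk of radius `R`. -/
noncomputable def diskTheta (R : ℝ) (z w : ℂ) : ℝ :=
  ((2 * (z * conj w + w * conj z) * (R : ℂ) ^ 2
      - ((((‖z‖) ^ 2 + R ^ 2) * ((‖w‖) ^ 2 + R ^ 2) : ℝ) : ℂ)) ^ 2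
    - (((R ^ 2 - (‖z‖) ^ 2) ^ 2 * (R ^ 2 - (‖w‖) ^ 2) ^ 2 : ℝ) : ℂ)).re

/-- The points `c k` satisfy the elliptic relative-equilibrium equations in the
Poincaré disk of radius `R` with masses `m`. -/
def EllipticRelEq (R : ℝ) {n : ℕ} (m : Fin n → ℝ) (c : Fin n → ℂ) : Prop :=
  ∀ k : Fin n,
    (R : ℂ) ^ 3 * (((R ^ 2 + (‖c k‖) ^ 2 : ℝ)) : ℂ) * c k
        / (((4 * (R ^ 2 - (‖c k‖) ^ 2) ^ 4 : ℝ)) : ℂ)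
      = -∑ j ∈ Finset.univ.erase k,
          (m j : ℂ) * ((((‖c j‖) ^ 2 - R ^ 2) ^ 2 : ℝ) : ℂ)
            * (c j - c k) * ((R : ℂ) ^ 2 - c k * conj (c j))
            / (((diskTheta R (c k) (c j)) ^ ((3 : ℝ) / 2) : ℝ) : ℂ)

noncomputable def rotationTerm (R : ℝ) (z : ℂ) : ℂ :=
  (R : ℂ) ^ 3 * ((R ^ 2 + ‖z‖ ^ 2 : ℝ) : ℂ) * z / ((4 * (R ^ 2 - ‖z‖ ^ 2) ^ 4 : ℝ) : ℂ)

noncomputable def attractionTerm (R μ : ℝ) (z w : ℂ) : ℂ :=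
  (μ : ℂ) * (((‖w‖ ^ 2 - R ^ 2) ^ 2 : ℝ) : ℂ) * (w - z) * ((R : ℂ) ^ 2 - z * conj w)
    / ((diskTheta R z w ^ ((3 : ℝ) / 2) : ℝ) : ℂ)

theorem ellipticRelEq_iff {R : ℝ} {n : ℕ} {m : Fin n → ℝ} {c : Fin n → ℂ} :
    EllipticRelEq R m c ↔
      ∀ k, rotationTerm R (c k) = -∑ j ∈ univ.erase k, attractionTerm R (m j) (c k) (c j) :=
  Iff.rfl

theorem EllipticRelEq.fin_three {R m₁ m₂ m₃ : ℝ} {z₁ z₂ z₃ : ℂ}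
    (h : EllipticRelEq R ![m₁, m₂, m₃] ![z₁, z₂, z₃]) :
    rotationTerm R z₁ = -(attractionTerm R m₂ z₁ z₂ + attractionTerm R m₃ z₁ z₃) ∧
    rotationTerm R z₂ = -(attractionTerm R m₁ z₂ z₁ + attractionTerm R m₃ z₂ z₃) ∧
    rotationTerm R z₃ = -(attractionTerm R m₁ z₃ z₁ + attractionTerm R m₂ z₃ z₂) := by
  rw [ellipticRelEq_iff] at h
  refine ⟨?_, ?_, ?_⟩
  · simpa [show univ.erase (0 : Fin 3) = {1, 2} by decide] using h 0
  · simpa [show univ.erase (1 : Fin 3) = {0, 2} by decide] using h 1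
  · simpa [show univ.erase (2 : Fin 3) = {0, 1} by decide] using h 2

theorem sq_rpow_three_halves (y : ℝ) : (y ^ 2) ^ ((3 : ℝ) / 2) = |y| ^ 3 := by
  rw [← sq_abs, ← Real.rpow_natCast_mul (abs_nonneg y)]
  norm_num

theorem diskTheta_zero_left (R : ℝ) (w : ℂ) : diskTheta R 0 w = (2 * R ^ 3 * ‖w‖) ^ 2 := by
  simp only [diskTheta, zero_mul, map_zero, mul_zero, add_zero, norm_zero]
  norm_cast; ring

theorem diskTheta_ofReal (R a b : ℝ) :
    diskTheta R a b = (2 * R * (a - b) * (a * b - R ^ 2)) ^ 2 := by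
  simp only [diskTheta, conj_ofReal, norm_real, Real.norm_eq_abs, sq_abs]
  norm_cast; ring

theorem diskTheta_neg_neg (R : ℝ) (z w : ℂ) : diskTheta R (-z) (-w) = diskTheta R z w := by
  simp [diskTheta]

theorem rotationTerm_neg (R : ℝ) (z : ℂ) : rotationTerm R (-z) = -rotationTerm R z := by
  rw [rotationTerm, rotationTerm, norm_neg]; ring

theorem attractionTerm_neg_neg (R μ : ℝ) (z w : ℂ) :
    attractionTerm R μ (-z) (-w) = -attractionTerm R μ z w := by
  simp only [attractionTerm, diskTheta_neg_neg, norm_neg, map_neg]; ring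

theorem rotationTerm_zero (R : ℝ) : rotationTerm R 0 = 0 := by simp [rotationTerm]

theorem attractionTerm_zero_left {R : ℝ} (hR : 0 < R) (μ : ℝ) (w : ℂ) :
    attractionTerm R μ 0 w = ((μ * (R ^ 2 - ‖w‖ ^ 2) ^ 2 / (8 * R ^ 7 * ‖w‖ ^ 3) : ℝ) : ℂ) * w := by
  rw [attractionTerm, diskTheta_zero_left, sq_rpow_three_halves, abs_of_nonneg (by positivity)]
  have hR' : (R : ℂ) ≠ 0 := by exact_mod_cast hR.ne'
  push_cast
  field_simp
  ring

theorem rotationTerm_ofReal (R a : ℝ) :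
    rotationTerm R a = ((R ^ 3 * (R ^ 2 + a ^ 2) * a / (4 * (R ^ 2 - a ^ 2) ^ 4) : ℝ) : ℂ) := by
  rw [rotationTerm, norm_real, Real.norm_eq_abs, sq_abs]
  push_cast; ring

theorem attractionTerm_ofReal (R μ a b : ℝ) :
    attractionTerm R μ a b = ((μ * (R ^ 2 - b ^ 2) ^ 2 * (b - a) * (R ^ 2 - a * b)
      / |2 * R * (a - b) * (a * b - R ^ 2)| ^ 3 : ℝ) : ℂ) := by
  rw [attractionTerm, diskTheta_ofReal, sq_rpow_three_halves, norm_real, Real.norm_eq_abs, sq_abs,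
    conj_ofReal]
  push_cast; ring

theorem eq_neg_norm_of_add_mul_eq_zero {p q : ℝ} {z : ℂ} (hp : 0 < p) (hq : 0 < q)
    (h : (p : ℂ) + q * z = 0) : z = -(‖z‖ : ℂ) ∧ p = q * ‖z‖ := by
  have hz : z = ((-(p / q) : ℝ) : ℂ) := by
    have hq' : (q : ℂ) ≠ 0 := by exact_mod_cast hq.ne'
    push_cast
    field_simp
    linear_combination h
  have hnorm : ‖z‖ = p / q := by
    rw [hz, norm_real, Real.norm_eq_abs, abs_neg, abs_of_pos (by positivity)]
  refine ⟨?_, ?_⟩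
  · rw [hnorm, hz]; push_cast; ring
  · rw [hnorm]; field_simp

theorem eq_neg_norm_of_balance_at_center {R μ ν α : ℝ} {c : ℂ} (hR : 0 < R) (hμ : 0 < μ)
    (hν : 0 < ν) (hα : α ∈ Set.Ioo 0 R) (hc : ‖c‖ < R) (hc0 : c ≠ 0)
    (h : rotationTerm R 0 = -(attractionTerm R μ 0 α + attractionTerm R ν 0 c)) :
    c = -(‖c‖ : ℂ) ∧ μ * ‖c‖ ^ 2 * (R ^ 2 - α ^ 2) ^ 2 = ν * α ^ 2 * (R ^ 2 - ‖c‖ ^ 2) ^ 2 := by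
  obtain ⟨hα0, hαR⟩ := hα
  have hx0 : 0 < ‖c‖ := norm_pos_iff.mpr hc0
  rw [rotationTerm_zero, attractionTerm_zero_left hR, attractionTerm_zero_left hR, eq_comm,
    neg_eq_zero, norm_real, Real.norm_eq_abs, abs_of_pos hα0, ← ofReal_mul] at h
  have hαR2 : 0 < R ^ 2 - α ^ 2 := by nlinarith
  have hxR2 : 0 < R ^ 2 - ‖c‖ ^ 2 := by nlinarith
  obtain ⟨hc_neg, hbalance⟩ := eq_neg_norm_of_add_mul_eq_zero (by positivity) (by positivity) h
  refine ⟨hc_neg, ?_⟩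
  field_simp at hbalance
  linear_combination hbalance

-- `8 R³ t²` times the rotation term at a real point `t`
noncomputable def rotationProfile (R t : ℝ) : ℝ :=
  2 * R ^ 6 * t ^ 3 * (R ^ 2 + t ^ 2) / (R ^ 2 - t ^ 2) ^ 4

theorem rotationProfile_eq_of_rotationTerm_eq {R μ₁ μ a b : ℝ} (hR : 0 < R) (ha : 0 < a)
    (haR : a < R) (hb : 0 ≤ b)
    (h : rotationTerm R a = -(attractionTerm R μ₁ a 0 + attractionTerm R μ a (-b))) :
    rotationProfile R a
      = μ₁ + μ * a ^ 2 * (R ^ 2 - b ^ 2) ^ 2 / ((a + b) ^ 2 * (R ^ 2 + a * b) ^ 2) := by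
  rw [← ofReal_zero, ← ofReal_neg, rotationTerm_ofReal, attractionTerm_ofReal,
    attractionTerm_ofReal, ← ofReal_add, ← ofReal_neg, ofReal_inj] at h
  rw [show 2 * R * (a - 0) * (a * 0 - R ^ 2) = -(2 * R ^ 3 * a) by ring,
    show 2 * R * (a - -b) * (a * -b - R ^ 2) = -(2 * R * (a + b) * (R ^ 2 + a * b)) by ring,
    abs_neg, abs_neg, abs_of_pos (by positivity), abs_of_pos (by positivity)] at h
  have haR2 : R ^ 2 - a ^ 2 ≠ 0 := by nlinarith
  have hab : 0 < (a + b) * (R ^ 2 + a * b) := by positivity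
  field_simp at h
  rw [rotationProfile]
  field_simp
  apply mul_left_cancel₀ (show 4 * R ^ 6 * a * ((a + b) * (R ^ 2 + a * b)) ≠ 0 by positivity)
  linear_combination h

theorem strictMonoOn_rotationProfile (R : ℝ) :
    StrictMonoOn (rotationProfile R) (Set.Ico 0 R) := by
  rintro s ⟨hs0, -⟩ t ⟨ht0, htR⟩ hst
  have hR : 0 < R := by linarith
  have hnum : 2 * R ^ 6 * s ^ 3 * (R ^ 2 + s ^ 2) < 2 * R ^ 6 * t ^ 3 * (R ^ 2 + t ^ 2) := by
    gcongr
  have hden : (R ^ 2 - t ^ 2) ^ 4 ≤ (R ^ 2 - s ^ 2) ^ 4 :=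
    pow_le_pow_left₀ (by nlinarith) (by nlinarith) 4
  unfold rotationProfile
  exact div_lt_div₀ hnum hden (by positivity) (pow_pos (by nlinarith) 4)

theorem ellipticRelEq_euler_three_bodies_general (R m₁ m₂ m₃ α : ℝ) (hR : 0 < R)
    (hm₂ : 0 < m₂) (hm₃ : 0 < m₃)
    (hα : α ∈ Set.Ioo 0 R) (c : ℂ) (hc : ‖c‖ < R)
    (hc0 : c ≠ 0)
    (h : EllipticRelEq R ![m₁, m₂, m₃] ![0, (α : ℂ), c]) :
    c = -(α : ℂ) ∧ m₂ = m₃ := by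
  obtain ⟨h₀, h₁, h₂⟩ := h.fin_three
  obtain ⟨hc_neg, hbalance⟩ := eq_neg_norm_of_balance_at_center hR hm₂ hm₃ hα hc hc0 h₀
  obtain ⟨hα0, hαR⟩ := hα
  set x := ‖c‖
  have hx0 : 0 < x := norm_pos_iff.mpr hc0
  rw [hc_neg] at h₁ h₂
  have hα_side := rotationProfile_eq_of_rotationTerm_eq hR hα0 hαR hx0.le h₁
  -- reflect the configuration through the origin
  rw [← neg_neg (α : ℂ), ← neg_zero, rotationTerm_neg, attractionTerm_neg_neg,
    attractionTerm_neg_neg, ← neg_add, neg_inj] at h₂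
  have hx_side := rotationProfile_eq_of_rotationTerm_eq hR hx0 hc hα0.le h₂
  have hxα : x = α := by
    refine (strictMonoOn_rotationProfile R).injOn ⟨hx0.le, hc⟩ ⟨hα0.le, hαR⟩ ?_
    rw [hx_side, hα_side, hbalance]
    ring
  refine ⟨by rw [hc_neg, hxα], ?_⟩
  rw [hxα] at hbalance
  have hαR2 : R ^ 2 - α ^ 2 ≠ 0 := by nlinarith
  apply mul_right_cancel₀ (show α ^ 2 * (R ^ 2 - α ^ 2) ^ 2 ≠ 0 by positivity)
  linear_combination hbalance

/-- Eulerian elliptic relative equilibria of the curved 3-body problem in the Poincaré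
disk with one body fixed at the center: if `(0, α, c)` satisfies the elliptic
relative-equilibrium equations, then `c = −α` and `m₂ = m₃`. -/
theorem ellipticRelEq_euler_three_bodies (R m₁ m₂ m₃ α : ℝ) (hR : 0 < R)
    (hm₁ : 0 < m₁) (hm₂ : 0 < m₂) (hm₃ : 0 < m₃)
    (hα : α ∈ Set.Ioo 0 R) (c : ℂ) (hc : ‖c‖ < R)
    (hc0 : c ≠ 0) (hcα : c ≠ (α : ℂ))
    (h : EllipticRelEq R ![m₁, m₂, m₃] ![0, (α : ℂ), c]) :
    c = -(α : ℂ) ∧ m₂ = m₃ :=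
  ellipticRelEq_euler_three_bodies_general R m₁ m₂ m₃ α hR hm₂ hm₃ hα c hc hc0 h
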